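/- arXiv:1901.03534 — 2 statements merged into one kernel-verified Lean document; each statement's English description precedes it below -/
import Mathlib

section
/- Let ϱ_T(ζ) = ζ/((1+Tζ²)·tanh(ζ)). For T>0, ϱ_T(ζ) is never a negative real number when Re(ζ) ≠ 0; in particular |arg(ϱ_T(ζ))| < π for Re(ζ) ≠ 0 away from poles/zeros. -/
/-!
Writing `ϱ_T(ζ) = ζ / (1 + T ζ²) · coth ζ`, both factors lie in the open right half-plane when
`Re ζ > 0`: the reciprocal of the first is `ζ⁻¹ + T ζ`, and `cosh ζ · conj (sinh ζ)` has real part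
`sinh (2 Re ζ) / 2`. Arguments of right half-plane numbers lie in `(-π/2, π/2)`, so the argument of
the product is their sum and cannot be `π`. The case `Re ζ < 0` follows since `ϱ_T` is even.
-/

noncomputable def rhoT (T : ℝ) (ζ : ℂ) : ℂ :=
  ζ * Complex.cosh ζ / ((1 + (T : ℂ) * ζ ^ 2) * Complex.sinh ζ)

open Complex ComplexConjugate

namespace Complex

theorem arg_mul_ne_pi_of_re_pos {a b : ℂ} (ha : 0 < a.re) (hb : 0 < b.re) :
    arg (a * b) ≠ Real.pi := by
  have ha₀ : a ≠ 0 := fun h ↦ by simp [h] at ha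
  have hb₀ : b ≠ 0 := fun h ↦ by simp [h] at hb
  obtain ⟨ha₁, ha₂⟩ := abs_lt.1 (abs_arg_lt_pi_div_two_iff.2 (Or.inl ha))
  obtain ⟨hb₁, hb₂⟩ := abs_lt.1 (abs_arg_lt_pi_div_two_iff.2 (Or.inl hb))
  rw [arg_mul ha₀ hb₀ ⟨by linarith, by linarith⟩]
  linarith

theorem re_pos_of_re_inv_pos {z : ℂ} (h : 0 < z⁻¹.re) : 0 < z.re := by
  have hz : z⁻¹ ≠ 0 := fun h0 ↦ by simp [h0] at h
  rw [← inv_inv z, inv_re]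
  exact div_pos h (normSq_pos.2 hz)

theorem re_div_one_add_mul_sq_pos {T : ℝ} (hT : 0 ≤ T) {z : ℂ} (hz : 0 < z.re) :
    0 < (z / (1 + T * z ^ 2)).re := by
  have hz₀ : z ≠ 0 := fun h ↦ by simp [h] at hz
  apply re_pos_of_re_inv_pos
  have hinv : (z / (1 + T * z ^ 2))⁻¹ = z⁻¹ + T * z := by
    field_simp
  rw [hinv, add_re, inv_re, re_ofReal_mul]
  have := normSq_pos.2 hz₀
  positivity

theorem re_cosh_mul_conj_sinh (z : ℂ) :
    (cosh z * conj (sinh z)).re = Real.sinh (2 * z.re) / 2 := by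
  have h : cosh z * conj (sinh z) = (sinh (z + conj z) - sinh (z - conj z)) / 2 := by
    rw [← sinh_conj, sinh_add, sinh_sub]
    ring
  rw [h, add_conj, sub_conj, sinh_mul_I, ← ofReal_sinh, ← ofReal_sin]
  simp only [div_ofNat_re, sub_re, ofReal_re, mul_I_re, ofReal_im, neg_zero, sub_zero]

theorem re_cosh_div_sinh_pos {z : ℂ} (hz : 0 < z.re) : 0 < (cosh z / sinh z).re := by
  have hnum : 0 < (cosh z * conj (sinh z)).re := by
    rw [re_cosh_mul_conj_sinh]
    exact half_pos (Real.sinh_pos_iff.2 (by linarith))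
  have hsinh : sinh z ≠ 0 := fun h ↦ by simp [h] at hnum
  rw [div_eq_mul_inv, inv_def, ← mul_assoc, re_mul_ofReal]
  exact mul_pos hnum (inv_pos.2 (normSq_pos.2 hsinh))

end Complex

theorem rhoT_eq_mul (T : ℝ) (ζ : ℂ) :
    rhoT T ζ = ζ / (1 + T * ζ ^ 2) * (cosh ζ / sinh ζ) :=
  (div_mul_div_comm _ _ _ _).symm

theorem rhoT_neg (T : ℝ) (ζ : ℂ) : rhoT T (-ζ) = rhoT T ζ := by
  simp only [rhoT, sinh_neg, cosh_neg, neg_sq, neg_mul, mul_neg, neg_div_neg_eq]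

theorem arg_rhoT_ne_pi {T : ℝ} (hT : 0 ≤ T) {ζ : ℂ} (hζ : ζ.re ≠ 0) :
    arg (rhoT T ζ) ≠ Real.pi := by
  wlog hpos : 0 < ζ.re generalizing ζ
  · rw [← rhoT_neg]
    exact this (by simpa using hζ) (by simpa using (not_lt.1 hpos).lt_of_ne hζ)
  rw [rhoT_eq_mul]
  exact arg_mul_ne_pi_of_re_pos (re_div_one_add_mul_sq_pos hT hpos) (re_cosh_div_sinh_pos hpos)

theorem rhoT_not_neg_real_general (T : ℝ) (hT : 0 < T) (ζ : ℂ) (hre : ζ.re ≠ 0) :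
    ¬ ((rhoT T ζ).im = 0 ∧ (rhoT T ζ).re < 0) :=
  fun ⟨him, hneg⟩ ↦ arg_rhoT_ne_pi hT.le hre (arg_eq_pi_iff.2 ⟨hneg, him⟩)

/-- ϱ_T(ζ) is never a negative real number when Re ζ ≠ 0 (away from zeros of the
denominator). -/
theorem rhoT_not_neg_real (T : ℝ) (hT : 0 < T) (ζ : ℂ) (hre : ζ.re ≠ 0)
    (hden : (1 + (T : ℂ) * ζ ^ 2) * Complex.sinh ζ ≠ 0) :
    ¬ ((rhoT T ζ).im = 0 ∧ (rhoT T ζ).re < 0) :=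
  rhoT_not_neg_real_general T hT ζ hre
end

section
/- The function f(x) = (1+ax²)/(1+bx²) on ℝ is positive definite if and only if b ≥ a ≥ 0. -/
/-!
For `b ≥ a ≥ 0`, `(1 + a x²) / (1 + b x²) = a / b + (1 - a / b) (1 + b x²)⁻¹` is a nonnegative
combination of a constant and of `(1 + b x²)⁻¹ = ∫₀^∞ e^{-s} cos (√b x s) ds`, a superposition of
the positive definite functions `cos (t x)`.

Conversely, testing positive definiteness at the two points `0, 1` gives `f 1 ≤ f 0`, i.e. `a ≤ b`;
and at `n` widely spaced points, where `f ≈ a / b` off the diagonal, the quadratic form with all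
coefficients `1` is about `n f 0 + n (n - 1) a / b`, which forces `a / b ≥ 0`.
-/

open MeasureTheory Real Set Filter Topology

open Finset in
/-- A real function f is positive definite if all matrices [f(ξᵢ−ξⱼ)] are positive
semidefinite, equivalently all real quadratic forms are nonnegative. -/
def IsPosDefRealFn (f : ℝ → ℝ) : Prop :=
  ∀ (n : ℕ) (ξ : Fin n → ℝ) (c : Fin n → ℝ),
    0 ≤ ∑ i, ∑ j, c i * c j * f (ξ i - ξ j)

theorem isPosDefRealFn_const {k : ℝ} (hk : 0 ≤ k) : IsPosDefRealFn fun _ => k := by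
  intro n ξ c
  simp_rw [← Finset.sum_mul, ← Finset.mul_sum, ← Finset.sum_mul]
  exact mul_nonneg (mul_self_nonneg _) hk

theorem isPosDefRealFn_cos_mul (t : ℝ) : IsPosDefRealFn fun x => cos (x * t) := by
  intro n ξ c
  have : ∑ i, ∑ j, c i * c j * cos ((ξ i - ξ j) * t)
      = (∑ i, c i * cos (ξ i * t)) ^ 2 + (∑ i, c i * sin (ξ i * t)) ^ 2 := by
    simp_rw [sq, Finset.sum_mul_sum, ← Finset.sum_add_distrib, sub_mul, cos_sub]
    refine Finset.sum_congr rfl fun i _ => Finset.sum_congr rfl fun j _ => ?_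
    ring
  rw [this]
  positivity

theorem IsPosDefRealFn.add {f g : ℝ → ℝ} (hf : IsPosDefRealFn f) (hg : IsPosDefRealFn g) :
    IsPosDefRealFn (f + g) := by
  intro n ξ c
  simpa only [Pi.add_apply, mul_add, Finset.sum_add_distrib] using
    add_nonneg (hf n ξ c) (hg n ξ c)

theorem IsPosDefRealFn.const_mul {f : ℝ → ℝ} (hf : IsPosDefRealFn f) {k : ℝ} (hk : 0 ≤ k) :
    IsPosDefRealFn fun x => k * f x := by
  intro n ξ c
  have : ∑ i, ∑ j, c i * c j * (k * f (ξ i - ξ j))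
      = k * ∑ i, ∑ j, c i * c j * f (ξ i - ξ j) := by
    simp_rw [Finset.mul_sum]
    refine Finset.sum_congr rfl fun i _ => Finset.sum_congr rfl fun j _ => ?_
    ring
  rw [this]
  exact mul_nonneg hk (hf n ξ c)

theorem IsPosDefRealFn.integral {α : Type*} [MeasurableSpace α] {μ : Measure α}
    {g : α → ℝ → ℝ} (hg : ∀ s, IsPosDefRealFn (g s))
    (hint : ∀ x, Integrable (fun s => g s x) μ) :
    IsPosDefRealFn fun x => ∫ s, g s x ∂μ := by
  intro n ξ c
  have : ∑ i, ∑ j, c i * c j * ∫ s, g s (ξ i - ξ j) ∂μ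
      = ∫ s, ∑ i, ∑ j, c i * c j * g s (ξ i - ξ j) ∂μ := by
    rw [integral_finsetSum _ fun i _ => integrable_finsetSum _ fun j _ => (hint _).const_mul _]
    simp_rw [integral_finsetSum _ fun j _ => (hint _).const_mul _, integral_const_mul]
  rw [this]
  exact integral_nonneg fun s => hg s n ξ c

theorem IsPosDefRealFn.apply_add_apply_neg_le {f : ℝ → ℝ} (hf : IsPosDefRealFn f) (x : ℝ) :
    f x + f (-x) ≤ 2 * f 0 := by
  have := hf 2 ![x, 0] ![1, -1]
  simp only [Fin.sum_univ_two] at this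
  norm_num at this
  linarith

theorem one_le_abs_natCast_sub_natCast {m k : ℕ} (h : m ≠ k) : 1 ≤ |(m : ℝ) - k| := by
  have : (m : ℤ) - k ≠ 0 := by omega
  exact_mod_cast Int.one_le_abs this

theorem IsPosDefRealFn.nonneg_of_tendsto_cocompact {f : ℝ → ℝ} (hf : IsPosDefRealFn f) {L : ℝ}
    (hL : Tendsto f (cocompact ℝ) (𝓝 L)) : 0 ≤ L := by
  by_contra! hneg
  have hev : ∀ᶠ x in cocompact ℝ, f x < L / 2 := hL.eventually (gt_mem_nhds (by linarith))
  rw [← Metric.cobounded_eq_cocompact, ← comap_norm_atTop, eventually_comap,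
    eventually_atTop] at hev
  obtain ⟨R, hR⟩ := hev
  have hf0 : 0 ≤ f 0 := by simpa using hf 1 ![0] ![1]
  obtain ⟨n, hn⟩ := exists_nat_gt ((f 0 - L / 2) / (-L / 2))
  have hn0 : (0 : ℝ) < n := lt_of_le_of_lt (div_nonneg (by linarith) (by linarith)) hn
  have hterm : ∀ i j : Fin n,
      f (i * |R| - j * |R|) ≤ L / 2 + if i = j then f 0 - L / 2 else 0 := by
    intro i j
    split_ifs with hij
    · simp [hij]
    · have hfar : R ≤ ‖(i : ℝ) * |R| - j * |R|‖ := by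
        rw [← sub_mul, Real.norm_eq_abs, abs_mul, abs_abs]
        exact (le_abs_self R).trans (le_mul_of_one_le_left (abs_nonneg R)
          (one_le_abs_natCast_sub_natCast (Fin.val_ne_of_ne hij)))
      linarith [hR _ hfar _ rfl]
  have hform := hf n (fun i => i * |R|) 1
  simp only [Pi.one_apply, one_mul] at hform
  have hsum := hform.trans
    (Finset.sum_le_sum fun i _ => Finset.sum_le_sum fun j _ => hterm i j)
  simp only [Finset.sum_add_distrib, Finset.sum_const, Finset.card_univ, Fintype.card_fin,
    nsmul_eq_mul, Finset.sum_ite_eq, Finset.mem_univ, ↓reduceIte] at hsum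
  rw [div_lt_iff₀ (by linarith)] at hn
  nlinarith

theorem exp_neg_mul_cos_eq_re (w s : ℝ) :
    exp (-s) * cos (w * s) = (Complex.exp ((-1 + w * Complex.I) * s)).re := by
  rw [Complex.exp_re]
  simp

theorem integrableOn_exp_neg_mul_cos (w : ℝ) :
    IntegrableOn (fun s => exp (-s) * cos (w * s)) (Ioi 0) := by
  simp_rw [exp_neg_mul_cos_eq_re]
  exact (integrableOn_exp_mul_complex_Ioi (by simp) 0).re

theorem integral_exp_neg_mul_cos (w : ℝ) :
    ∫ s in Ioi 0, exp (-s) * cos (w * s) = (1 + w ^ 2)⁻¹ := by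
  simp_rw [exp_neg_mul_cos_eq_re, ← RCLike.re_to_complex]
  rw [integral_re (integrableOn_exp_mul_complex_Ioi (by simp) 0),
    integral_exp_mul_complex_Ioi (by simp)]
  simp [Complex.div_re, Complex.normSq_apply, sq]

theorem isPosDefRealFn_inv_one_add_mul_sq {b : ℝ} (hb : 0 ≤ b) :
    IsPosDefRealFn fun x => (1 + b * x ^ 2)⁻¹ := by
  have hrepr : ∀ x, (fun s => exp (-s) * cos (√b * x * s))
      = fun s => exp (-s) * cos (x * (√b * s)) :=
    fun x => funext fun s => by ring_nf
  have : (fun x => (1 + b * x ^ 2)⁻¹) = fun x => ∫ s in Ioi 0, exp (-s) * cos (x * (√b * s)) := by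
    ext x
    rw [← hrepr, integral_exp_neg_mul_cos, mul_pow, sq_sqrt hb]
  rw [this]
  exact IsPosDefRealFn.integral (fun s => (isPosDefRealFn_cos_mul _).const_mul (exp_pos _).le)
    fun x => hrepr x ▸ integrableOn_exp_neg_mul_cos (√b * x)

theorem div_one_add_mul_sq_eq {a b : ℝ} (hb : 0 < b) (x : ℝ) :
    (1 + a * x ^ 2) / (1 + b * x ^ 2) = a / b + (1 - a / b) * (1 + b * x ^ 2)⁻¹ := by
  have : 0 < 1 + b * x ^ 2 := by positivity
  field_simp
  ring

theorem tendsto_div_one_add_mul_sq_cocompact {a b : ℝ} (hb : 0 < b) :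
    Tendsto (fun x : ℝ => (1 + a * x ^ 2) / (1 + b * x ^ 2)) (cocompact ℝ) (𝓝 (a / b)) := by
  have hden : Tendsto (fun x : ℝ => 1 + b * ‖x‖ ^ 2) (cocompact ℝ) atTop :=
    tendsto_atTop_add_const_left _ _ <| Tendsto.const_mul_atTop hb <|
      (tendsto_pow_atTop two_ne_zero).comp tendsto_norm_cocompact_atTop
  simp only [Real.norm_eq_abs, sq_abs] at hden
  simpa [div_one_add_mul_sq_eq hb] using
    tendsto_const_nhds.add (tendsto_const_nhds.mul hden.inv_tendsto_atTop)

theorem posDef_rational_iff (a b : ℝ) (hb : 0 < b) :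
    IsPosDefRealFn (fun x => (1 + a * x ^ 2) / (1 + b * x ^ 2)) ↔ (0 ≤ a ∧ a ≤ b) := by
  constructor
  · intro h
    have hab : 2 * ((1 + a) / (1 + b)) ≤ 2 * 1 := by
      simpa [two_mul] using h.apply_add_apply_neg_le 1
    have hlim : 0 ≤ a / b :=
      h.nonneg_of_tendsto_cocompact (tendsto_div_one_add_mul_sq_cocompact hb)
    constructor
    · simpa using (le_div_iff₀ hb).mp hlim
    · have := (div_le_one (by linarith : 0 < 1 + b)).mp (le_of_mul_le_mul_left hab two_pos)
      linarith
  · rintro ⟨ha, hab⟩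
    rw [funext (div_one_add_mul_sq_eq hb)]
    exact (isPosDefRealFn_const (div_nonneg ha hb.le)).add
      ((isPosDefRealFn_inv_one_add_mul_sq hb.le).const_mul
        (sub_nonneg.2 ((div_le_one hb).2 hab)))
end
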